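/- arXiv:math/0610803 — 2 statements merged into one kernel-verified Lean document; each statement's English description precedes it below -/
import Mathlib

section
/- Let G be a group and suppose Γ = U₁(ℤG) is hypercentral, i.e. every element of Γ lies in some term Z_n(Γ) of the upper central series. Then every finite subgroup of G is normal in G. -/
/-- The augmentation homomorphism `ℤG → ℤ` of the integral group ring `ℤG`,
sending every group element to `1`. -/
noncomputable def augmentation (G : Type*) [Group G] :
    MonoidAlgebra ℤ G →ₐ[ℤ] ℤ :=
  MonoidAlgebra.lift ℤ ℤ G 1

/-- `Γ = U₁(ℤG)`: the group of units of the integral group ring `ℤG` of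
augmentation one, as a subgroup of the unit group of `ℤG`. -/
noncomputable def U1 (G : Type*) [Group G] : Subgroup (MonoidAlgebra ℤ G)ˣ :=
  (Units.map (augmentation G).toMonoidHom).ker

/-- The trivial-unit embedding `G → (ℤG)ˣ`. -/
noncomputable def trivUnit (G : Type*) [Group G] : G →* (MonoidAlgebra ℤ G)ˣ :=
  (Units.map (MonoidAlgebra.of ℤ G)).comp toUnits.toMonoidHom

theorem trivUnit_mem_U1 (G : Type*) [Group G] (g : G) : trivUnit G g ∈ U1 G := by
  simp [U1, trivUnit, augmentation, MonoidHom.mem_ker, Units.ext_iff]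

/-- The trivial-unit embedding `G → U₁(ℤG)`. -/
noncomputable def trivUnitU1 (G : Type*) [Group G] : G →* ↥(U1 G) :=
  (trivUnit G).codRestrict (U1 G) (trivUnit_mem_U1 G)

open MonoidAlgebra

section
variable {G : Type*} [Group G]

noncomputable def sconj (h : G) (b : MonoidAlgebra ℤ G) : MonoidAlgebra ℤ G :=
  of ℤ G h * b * of ℤ G h⁻¹

noncomputable def Dop (h : G) (b : MonoidAlgebra ℤ G) : MonoidAlgebra ℤ G :=
  b - sconj h b

def Qprop (h : G) (b : MonoidAlgebra ℤ G) : Prop :=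
  ∀ z : ℤ, b * of ℤ G (h ^ z) * b = 0

lemma Qprop.self_mul {h : G} {b : MonoidAlgebra ℤ G} (hQ : Qprop h b) : b * b = 0 := by
  have := hQ 0
  rw [zpow_zero, map_one, mul_one] at this
  exact this

lemma Qprop.mid_mul {h : G} {b : MonoidAlgebra ℤ G} (hQ : Qprop h b) :
    b * of ℤ G h * b = 0 := by
  have := hQ 1
  rwa [zpow_one] at this

lemma Qprop.dop {h : G} {b : MonoidAlgebra ℤ G} (hQ : Qprop h b) : Qprop h (Dop h b) := by
  intro z
  have hA : ∀ (w : ℤ) (c : MonoidAlgebra ℤ G),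
      b * (of ℤ G (h ^ w) * (b * c)) = 0 := by
    intro w c
    calc b * (of ℤ G (h ^ w) * (b * c)) = (b * of ℤ G (h ^ w) * b) * c := by
          simp only [mul_assoc]
      _ = 0 := by rw [hQ w, zero_mul]
  have hA2 : ∀ (w : ℤ), b * (of ℤ G (h ^ w) * b) = 0 := by
    intro w
    calc b * (of ℤ G (h ^ w) * b) = b * of ℤ G (h ^ w) * b := by simp only [mul_assoc]
      _ = 0 := hQ w
  have e1 : ∀ (w : ℤ) (c : MonoidAlgebra ℤ G),
      of ℤ G (h ^ w) * (of ℤ G h * c) = of ℤ G (h ^ (w+1)) * c := by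
    intro w c
    rw [← mul_assoc, ← map_mul, ← zpow_add_one]
  have e2 : ∀ (w : ℤ) (c : MonoidAlgebra ℤ G),
      of ℤ G h⁻¹ * (of ℤ G (h ^ w) * c) = of ℤ G (h ^ (w-1)) * c := by
    intro w c
    rw [← mul_assoc, ← map_mul, ← zpow_neg_one, ← zpow_add h, neg_add_eq_sub]
  have e1' : ∀ (w : ℤ), of ℤ G (h ^ w) * of ℤ G h = of ℤ G (h ^ (w+1)) := by
    intro w
    rw [← map_mul, ← zpow_add_one]
  simp only [Dop, sconj, sub_mul, mul_sub, mul_assoc, e1, e2, e1', hA, hA2,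
    add_sub_cancel_right, mul_zero, zero_mul, sub_zero, zero_sub, neg_zero, sub_self]

lemma of_mul_inv (x : G) : (of ℤ G x) * (of ℤ G x⁻¹) = 1 := by
  rw [← map_mul, mul_inv_cancel, map_one]

noncomputable def sqUnit (b : MonoidAlgebra ℤ G) (hb : b * b = 0) : (MonoidAlgebra ℤ G)ˣ where
  val := 1 + b
  inv := 1 - b
  val_inv := by
    have : (1+b)*(1-b) = 1 - b*b := by noncomm_ring
    rw [this, hb, sub_zero]
  inv_val := by
    have : (1-b)*(1+b) = 1 - b*b := by noncomm_ring
    rw [this, hb, sub_zero]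

lemma aug_of (x : G) : augmentation G (of ℤ G x) = 1 := by
  simp [augmentation]

lemma sqUnit_mem_U1 (b : MonoidAlgebra ℤ G) (hb : b * b = 0)
    (haug : augmentation G b = 0) : sqUnit b hb ∈ U1 G := by
  simp only [U1, MonoidHom.mem_ker, Units.ext_iff, Units.coe_map]
  show augmentation G ((sqUnit b hb : (MonoidAlgebra ℤ G)ˣ) : MonoidAlgebra ℤ G) = _
  show augmentation G (1 + b) = _
  rw [map_add, map_one, haug, add_zero]
  rfl

lemma trivUnit_val (x : G) : ((trivUnit G x : (MonoidAlgebra ℤ G)ˣ) : MonoidAlgebra ℤ G) = of ℤ G x := rfl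

lemma trivUnit_inv_val (x : G) :
    (((trivUnit G x)⁻¹ : (MonoidAlgebra ℤ G)ˣ) : MonoidAlgebra ℤ G) = of ℤ G x⁻¹ := by
  rw [← map_inv]
  rfl

lemma comm_eq (h : G) (b : MonoidAlgebra ℤ G) (hQ : Qprop h b) :
    (sqUnit b hQ.self_mul) * trivUnit G h * (sqUnit b hQ.self_mul)⁻¹ * (trivUnit G h)⁻¹
      = sqUnit (Dop h b) hQ.dop.self_mul := by
  rw [Units.ext_iff, Units.val_mul, Units.val_mul, Units.val_mul, trivUnit_val, trivUnit_inv_val]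
  show (1 + b) * of ℤ G h * (1 - b) * of ℤ G h⁻¹ = 1 + Dop h b
  have key : (1 + b) * of ℤ G h * (1 - b) * of ℤ G h⁻¹
      = of ℤ G h * of ℤ G h⁻¹ + b * (of ℤ G h * of ℤ G h⁻¹)
        - of ℤ G h * b * of ℤ G h⁻¹ - (b * of ℤ G h * b) * of ℤ G h⁻¹ := by
    noncomm_ring
  rw [key, of_mul_inv, hQ.mid_mul, zero_mul, mul_one, sub_zero, Dop, sconj]
  abel

noncomputable def sqU1 (h : G) (b : MonoidAlgebra ℤ G) (hQ : Qprop h b)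
    (haug : augmentation G b = 0) : ↥(U1 G) :=
  ⟨sqUnit b hQ.self_mul, sqUnit_mem_U1 b hQ.self_mul haug⟩

lemma aug_sconj (h : G) (b : MonoidAlgebra ℤ G) :
    augmentation G (sconj h b) = augmentation G b := by
  rw [sconj, map_mul, map_mul, aug_of, aug_of, one_mul, mul_one]

lemma aug_dop (h : G) (b : MonoidAlgebra ℤ G) (haug : augmentation G b = 0) :
    augmentation G (Dop h b) = 0 := by
  rw [Dop, map_sub, aug_sconj, haug, sub_zero]

lemma comm_eq_U1 (h : G) (b : MonoidAlgebra ℤ G) (hQ : Qprop h b)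
    (haug : augmentation G b = 0) :
    sqU1 h b hQ haug * trivUnitU1 G h * (sqU1 h b hQ haug)⁻¹ * (trivUnitU1 G h)⁻¹
      = sqU1 h (Dop h b) hQ.dop (aug_dop h b haug) := by
  apply Subtype.ext
  show (sqUnit b hQ.self_mul) * (trivUnit G h) * (sqUnit b hQ.self_mul)⁻¹
      * (trivUnit G h)⁻¹ = _
  exact comm_eq h b hQ

lemma main_ind (h : G) (n : ℕ) : ∀ (b : MonoidAlgebra ℤ G) (hQ : Qprop h b)
    (haug : augmentation G b = 0),
    sqU1 h b hQ haug ∈ upperCentralSeries ↥(U1 G) n → (Dop h)^[n] b = 0 := by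
  induction n with
  | zero =>
      intro b hQ haug hmem
      rw [upperCentralSeries, upperCentralSeries_zero, Subgroup.mem_bot] at hmem
      have h1 : ((sqU1 h b hQ haug : ↥(U1 G)) : (MonoidAlgebra ℤ G)ˣ) = 1 := by
        rw [hmem]; rfl
      have h2 : (1 : MonoidAlgebra ℤ G) + b = 1 := congrArg Units.val h1
      have hb : b = 0 := by
        have := add_right_injective (1 : MonoidAlgebra ℤ G) (h2.trans (add_zero 1).symm)
        exact this
      simp [hb]
  | succ n ih =>
      intro b hQ haug hmem
      rw [upperCentralSeries, mem_upperCentralSeries_succ_iff] at hmem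
      have h1 := hmem (trivUnitU1 G h)
      rw [commutatorElement_def, comm_eq_U1 h b hQ haug] at h1
      have h2 := ih (Dop h b) hQ.dop (aug_dop h b haug) h1
      rwa [Function.iterate_succ_apply]

lemma ofof (x y : G) : (of ℤ G x) * (of ℤ G y) = of ℤ G (x * y) := (map_mul _ _ _).symm

lemma of_inv_mul (x : G) : (of ℤ G x⁻¹) * (of ℤ G x) = 1 := by
  rw [ofof, inv_mul_cancel, map_one]

lemma sconj_sub (h : G) (x y : MonoidAlgebra ℤ G) :
    sconj h (x - y) = sconj h x - sconj h y := by
  simp [sconj, mul_sub, sub_mul]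

lemma sconj_iterate (h : G) (k : ℕ) (b : MonoidAlgebra ℤ G) :
    (sconj h)^[k] b = of ℤ G (h ^ k) * b * of ℤ G (h ^ k)⁻¹ := by
  induction k with
  | zero => simp [← MonoidAlgebra.one_def]
  | succ n ih =>
      rw [Function.iterate_succ_apply', ih, sconj]
      calc of ℤ G h * (of ℤ G (h ^ n) * b * of ℤ G (h ^ n)⁻¹) * of ℤ G h⁻¹
          = (of ℤ G h * of ℤ G (h ^ n)) * b * (of ℤ G (h ^ n)⁻¹ * of ℤ G h⁻¹) := by
            simp only [mul_assoc]
        _ = of ℤ G (h ^ (n+1)) * b * of ℤ G (h ^ (n+1))⁻¹ := by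
            rw [ofof, ofof, ← pow_succ', ← mul_inv_rev, ← pow_succ']

lemma sconj_iterate_m (h : G) {m : ℕ} (hm : h ^ m = 1) (b : MonoidAlgebra ℤ G) :
    (sconj h)^[m] b = b := by
  rw [sconj_iterate, hm]; simp [← MonoidAlgebra.one_def]

lemma Dop_sconj_iterate (h : G) (k : ℕ) (b : MonoidAlgebra ℤ G) :
    (sconj h)^[k] (Dop h b) = (sconj h)^[k] b - (sconj h)^[k+1] b := by
  induction k with
  | zero => simp [Dop]
  | succ n ih =>
      rw [Function.iterate_succ_apply', ih, sconj_sub,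
        ← Function.iterate_succ_apply' (sconj h) n b,
        ← Function.iterate_succ_apply' (sconj h) (n+1) b]

lemma smul_eq_zero_ma {m : ℕ} (hm : 0 < m) (x : MonoidAlgebra ℤ G) (h : m • x = 0) : x = 0 := by
  letI : NoZeroSMulDivisors ℤ (MonoidAlgebra ℤ G) :=
    Function.Injective.noZeroSMulDivisors _ MonoidAlgebra.coeff_injective rfl (fun _ _ => rfl)
  have h2 : (m : ℤ) • x = 0 := by rwa [natCast_zsmul]
  rcases smul_eq_zero.mp h2 with h3 | h3
  · omega
  · exact h3

lemma desc1 (h : G) {m : ℕ} (hm : h ^ m = 1) (hm0 : 0 < m) (b : MonoidAlgebra ℤ G)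
    (hd : Dop h (Dop h b) = 0) : Dop h b = 0 := by
  have hz : sconj h (Dop h b) = Dop h b := (sub_eq_zero.mp hd).symm
  have hiter : ∀ k : ℕ, (sconj h)^[k] (Dop h b) = Dop h b := by
    intro k; induction k with
    | zero => rfl
    | succ n ih => rw [Function.iterate_succ_apply', ih, hz]
  have hsum : ∑ k ∈ Finset.range m, (sconj h)^[k] (Dop h b) = m • Dop h b := by
    rw [Finset.sum_congr rfl fun k _ => hiter k]; simp
  have hsum2 : ∑ k ∈ Finset.range m, (sconj h)^[k] (Dop h b) = 0 := by
    calc ∑ k ∈ Finset.range m, (sconj h)^[k] (Dop h b)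
        = ∑ k ∈ Finset.range m, ((sconj h)^[k] b - (sconj h)^[k+1] b) :=
          Finset.sum_congr rfl fun k _ => Dop_sconj_iterate h k b
      _ = (sconj h)^[0] b - (sconj h)^[m] b := Finset.sum_range_sub' _ m
      _ = 0 := by rw [Function.iterate_zero_apply, sconj_iterate_m h hm, sub_self]
  exact smul_eq_zero_ma hm0 _ (by rw [← hsum, hsum2])

lemma descn (h : G) {m : ℕ} (hm : h ^ m = 1) (hm0 : 0 < m) :
    ∀ (n : ℕ) (b : MonoidAlgebra ℤ G), (Dop h)^[n] (Dop h b) = 0 → Dop h b = 0 := by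
  intro n
  induction n with
  | zero => intro b hb; exact hb
  | succ k ih =>
      intro b hb
      rw [Function.iterate_succ_apply] at hb
      exact desc1 h hm hm0 b (ih (Dop h b) hb)



noncomputable def hhat (h : G) (m : ℕ) : MonoidAlgebra ℤ G :=
  ∑ k ∈ Finset.range m, of ℤ G (h ^ k)

lemma hhat_mul_of (h : G) (m : ℕ) (hm : h ^ m = 1) :
    hhat h m * of ℤ G h = hhat h m := by
  rw [hhat, Finset.sum_mul]
  rw [Finset.sum_congr rfl (fun k _ => by
    rw [← map_mul, ← pow_succ] :
      ∀ k ∈ Finset.range m, of ℤ G (h ^ k) * of ℤ G h = of ℤ G (h ^ (k+1)))]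
  have e1 := Finset.sum_range_succ' (fun k => of ℤ G (h ^ k)) m
  have e2 := Finset.sum_range_succ (fun k => of ℤ G (h ^ k)) m
  have e3 : (∑ k ∈ Finset.range m, of ℤ G (h ^ (k+1))) + of ℤ G (h ^ 0)
      = (∑ k ∈ Finset.range m, of ℤ G (h ^ k)) + of ℤ G (h ^ m) := by
    rw [← e1, e2]
  rw [hm, pow_zero] at e3
  exact add_right_cancel e3

lemma hhat_mul_inv (h : G) (m : ℕ) (hm : h ^ m = 1) :
    hhat h m * of ℤ G h⁻¹ = hhat h m := by
  conv_lhs => rw [← hhat_mul_of h m hm]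
  rw [mul_assoc, of_mul_inv, mul_one]

lemma hhat_mul_ofz (h : G) (m : ℕ) (hm : h ^ m = 1) :
    ∀ z : ℤ, hhat h m * of ℤ G (h ^ z) = hhat h m := by
  intro z
  induction z using Int.induction_on with
  | zero => rw [zpow_zero, map_one, mul_one]
  | succ n ih => rw [zpow_add_one, map_mul, ← mul_assoc, ih, hhat_mul_of h m hm]
  | pred n ih => rw [zpow_sub_one, map_mul, ← mul_assoc, ih, hhat_mul_inv h m hm]

lemma hhat_mul_sub (h : G) (m : ℕ) (hm : h ^ m = 1) :
    hhat h m * (1 - of ℤ G h) = 0 := by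
  rw [mul_sub, mul_one, hhat_mul_of h m hm, sub_self]

lemma hhat_killL (h : G) (m : ℕ) (hm : h ^ m = 1) (c : MonoidAlgebra ℤ G) :
    hhat h m * ((1 - of ℤ G h) * c) = 0 := by
  rw [← mul_assoc, hhat_mul_sub h m hm, zero_mul]

noncomputable def abc (g h : G) (m : ℕ) : MonoidAlgebra ℤ G :=
  (1 - of ℤ G h) * of ℤ G g * hhat h m

lemma abc_mul_ofz (g h : G) (m : ℕ) (hm : h ^ m = 1) (z : ℤ) :
    abc g h m * of ℤ G (h ^ z) = abc g h m := by
  rw [abc, mul_assoc ((1 - of ℤ G h) * of ℤ G g), hhat_mul_ofz h m hm]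

lemma abc_Q (g h : G) (m : ℕ) (hm : h ^ m = 1) : Qprop h (abc g h m) := by
  intro z
  rw [abc_mul_ofz g h m hm z]
  show abc g h m * abc g h m = 0
  rw [abc]
  simp only [mul_assoc]
  rw [hhat_killL h m hm, mul_zero, mul_zero]

lemma abc_aug (g h : G) (m : ℕ) : augmentation G (abc g h m) = 0 := by
  rw [abc, map_mul, map_mul, map_sub, map_one, aug_of, sub_self, zero_mul, zero_mul]

lemma abc_dop_zero (g h : G) (m : ℕ) (hm : h ^ m = 1) (hm0 : 0 < m)
    (hd : Dop h (abc g h m) = 0) : abc g h m = 0 := by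
  have hz : sconj h (abc g h m) = abc g h m := by
    have := sub_eq_zero.mp hd
    exact this.symm
  have hiter : ∀ k : ℕ, (sconj h)^[k] (abc g h m) = abc g h m := by
    intro k; induction k with
    | zero => rfl
    | succ n ih => rw [Function.iterate_succ_apply', ih, hz]
  have h2 : ∀ k : ℕ, (sconj h)^[k] (abc g h m) = of ℤ G (h ^ k) * abc g h m := by
    intro k
    rw [sconj_iterate]
    have e : abc g h m * of ℤ G ((h ^ k)⁻¹) = abc g h m := by
      have e2 : ((h : G) ^ k)⁻¹ = h ^ (-(k : ℤ)) := by rw [zpow_neg, zpow_natCast]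
      rw [e2, abc_mul_ofz g h m hm]
    rw [mul_assoc, e]
  have h3 : hhat h m * abc g h m = 0 := by
    rw [abc]
    simp only [mul_assoc]
    rw [hhat_killL h m hm]
  have h4 : m • abc g h m = 0 := by
    calc m • abc g h m = ∑ _k ∈ Finset.range m, abc g h m := by simp
      _ = ∑ k ∈ Finset.range m, (sconj h)^[k] (abc g h m) :=
          (Finset.sum_congr rfl fun k _ => (hiter k).symm)
      _ = ∑ k ∈ Finset.range m, of ℤ G (h ^ k) * abc g h m :=
          Finset.sum_congr rfl fun k _ => h2 k
      _ = hhat h m * abc g h m := by rw [hhat, Finset.sum_mul]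
      _ = 0 := h3
  exact smul_eq_zero_ma hm0 _ h4

end


/-- If `Γ = U₁(ℤG)` is hypercentral, then every finite subgroup of `G` is
normal in `G`. -/
theorem stmt7 (G : Type*) [Group G]
    (hyp : ∀ x : ↥(U1 G), ∃ n : ℕ, x ∈ upperCentralSeries ↥(U1 G) n)
    (H : Subgroup G) (hH : (H : Set G).Finite) :
    H.Normal := by
  have claim : ∀ (g h : G), h ∈ H → g⁻¹ * h * g ∈ H := by
    classical
    intro g h hh
    haveI : Finite ↥H := hH.to_subtype
    obtain ⟨m, hm0, hm⟩ := isOfFinOrder_iff_pow_eq_one.mp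
      (isOfFinOrder_of_finite (⟨h, hh⟩ : H))
    replace hm : h ^ m = 1 := by
      have := congrArg (Subtype.val) hm
      simpa using this
    obtain ⟨n, hn⟩ := hyp (sqU1 h (abc g h m) (abc_Q g h m hm) (abc_aug g h m))
    have hDn : (Dop h)^[n] (abc g h m) = 0 := main_ind h n _ _ _ hn
    have ha : abc g h m = 0 := by
      cases n with
      | zero => exact hDn
      | succ k =>
          rw [Function.iterate_succ_apply] at hDn
          exact abc_dop_zero g h m hm hm0 (descn h hm hm0 k (abc g h m) hDn)
    have hb : of ℤ G h * (of ℤ G g * hhat h m) = of ℤ G g * hhat h m := by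
      rw [abc, sub_mul, sub_mul, one_mul, sub_eq_zero] at ha
      rw [← mul_assoc]
      exact ha.symm
    have hsum1 : of ℤ G g * hhat h m = ∑ k ∈ Finset.range m, of ℤ G (g * h ^ k) := by
      rw [hhat, Finset.mul_sum]
      exact Finset.sum_congr rfl fun k _ => ofof g (h ^ k)
    have hsum2 : of ℤ G h * (of ℤ G g * hhat h m)
        = ∑ k ∈ Finset.range m, of ℤ G (h * (g * h ^ k)) := by
      rw [hsum1, Finset.mul_sum]
      exact Finset.sum_congr rfl fun k _ => ofof h (g * h ^ k)
    rw [hsum2, hsum1] at hb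
    have hS : (∑ k ∈ Finset.range m, Finsupp.single (h * (g * h ^ k)) (1:ℤ))
        = ∑ k ∈ Finset.range m, Finsupp.single (g * h ^ k) (1:ℤ) := by
      have := congrArg MonoidAlgebra.coeff hb
      simpa [MonoidAlgebra.coeff_sum] using this
    have happ := DFunLike.congr_fun hS g
    simp only [Finsupp.finset_sum_apply, Finsupp.single_apply] at happ
    have hpos : (0 : ℤ) < ∑ k ∈ Finset.range m, if g * h ^ k = g then 1 else 0 := by
      have h0 : (if g * h ^ 0 = g then (1:ℤ) else 0) = 1 := by
        rw [pow_zero, mul_one, if_pos rfl]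
      have hle := Finset.single_le_sum
        (f := fun k => if g * h ^ k = g then (1:ℤ) else 0)
        (fun i _ => by positivity) (Finset.mem_range.mpr hm0)
      have hle' : (if g * h ^ 0 = g then (1:ℤ) else 0)
          ≤ ∑ k ∈ Finset.range m, if g * h ^ k = g then (1:ℤ) else 0 := hle
      rw [h0] at hle'
      linarith
    have hex : ∃ k ∈ Finset.range m, h * (g * h ^ k) = g := by
      by_contra hcon
      push_neg at hcon
      have : ∑ k ∈ Finset.range m, (if h * (g * h ^ k) = g then (1:ℤ) else 0) = 0 :=
        Finset.sum_eq_zero fun k hk => if_neg (hcon k hk)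
      rw [happ] at this
      omega
    obtain ⟨k, -, hk⟩ := hex
    have key1 : g⁻¹ * h * g * h ^ k = 1 := by
      have : g⁻¹ * h * g * h ^ k = g⁻¹ * (h * (g * h ^ k)) := by group
      rw [this, hk, inv_mul_cancel]
    have key2 : g⁻¹ * h * g = (h ^ k)⁻¹ := mul_eq_one_iff_eq_inv.mp key1
    rw [key2]
    exact H.inv_mem (H.pow_mem hh k)
  refine { conj_mem := ?_ }
  intro n hn g
  have := claim g⁻¹ n hn
  rwa [inv_inv] at this
end

section
/- Let G be a group containing a nontrivial element of finite order and K a field of characteristic p > 0 that is not algebraic over its prime field GF(p) (transcendence degree at least 1). Then V(KG) contains a subgroup isomorphic to ℤ × ℤ or an infinite abelian subgroup of exponent p; in particular V(KG) contains an infinite abelian subgroup that is not virtually cyclic. -/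
/-- The augmentation homomorphism `KG → K` of the group algebra `KG`,
sending every group element to `1`. -/
noncomputable def augK (K : Type*) [Field K] (G : Type*) [Group G] :
    MonoidAlgebra K G →ₐ[K] K :=
  MonoidAlgebra.lift K K G 1

/-- `V(KG)`: the group of units of the group algebra `KG` of augmentation one,
as a subgroup of the unit group of `KG`. -/
noncomputable def V1 (K : Type*) [Field K] (G : Type*) [Group G] :
    Subgroup (MonoidAlgebra K G)ˣ :=
  (Units.map (augK K G).toMonoidHom).ker

/-! ### Auxiliary lemmas -/

lemma not_vc_of_exponent {Γ : Type*} [Group Γ] [Infinite Γ] {p : ℕ} (hp : p ≠ 0)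
    (hexp : ∀ a : Γ, a ^ p = 1) :
    ¬ ∃ C : Subgroup Γ, IsCyclic ↥C ∧ C.FiniteIndex := by
  rintro ⟨C, hC, hCfi⟩
  obtain ⟨ζ, hζ⟩ := hC.exists_generator
  have hζp : ζ ^ p = 1 := by
    apply Subtype.ext
    rw [SubmonoidClass.coe_pow]
    exact hexp _
  have hford : IsOfFinOrder ζ := isOfFinOrder_iff_pow_eq_one.mpr ⟨p, Nat.pos_of_ne_zero hp, hζp⟩
  haveI : Finite ↥C := by
    have h1 : (Subgroup.zpowers ζ : Set ↥C).Finite := finite_zpowers.mpr hford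
    haveI : Finite ↥(Subgroup.zpowers ζ) := h1.to_subtype
    exact Finite.of_injective (fun x : ↥C => (⟨x, hζ x⟩ : ↥(Subgroup.zpowers ζ)))
      (fun a b hab => congrArg Subtype.val hab)
  haveI : Finite (Γ ⧸ C) := (Nat.card_ne_zero.mp hCfi.index_ne_zero).2
  haveI : Finite Γ := Finite.of_equiv _ (Subgroup.groupEquivQuotientProdSubgroup (s := C)).symm
  exact not_finite Γ

lemma zz_not_cyclic_finiteIndex :
    ¬ ∃ C : Subgroup (Multiplicative ℤ × Multiplicative ℤ), IsCyclic ↥C ∧ C.FiniteIndex := by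
  rintro ⟨C, hC, hCfi⟩
  obtain ⟨ζ, hζ⟩ := hC.exists_generator
  set m := C.index with hm
  have hmne : m ≠ 0 := hCfi.index_ne_zero
  have ha : (Multiplicative.ofAdd (1 : ℤ), (1 : Multiplicative ℤ)) ^ m ∈ C :=
    C.pow_index_mem _
  have hb : ((1 : Multiplicative ℤ), Multiplicative.ofAdd (1 : ℤ)) ^ m ∈ C :=
    C.pow_index_mem _
  obtain ⟨k, hk⟩ := Subgroup.mem_zpowers_iff.mp (hζ ⟨_, ha⟩)
  obtain ⟨l, hl⟩ := Subgroup.mem_zpowers_iff.mp (hζ ⟨_, hb⟩)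
  have hk' := congrArg (fun x : ↥C => (x : Multiplicative ℤ × Multiplicative ℤ)) hk
  have hl' := congrArg (fun x : ↥C => (x : Multiplicative ℤ × Multiplicative ℤ)) hl
  simp only [SubgroupClass.coe_zpow] at hk' hl'
  set z := (ζ : Multiplicative ℤ × Multiplicative ℤ) with hz
  have e1 : z.1 ^ k = Multiplicative.ofAdd (1 : ℤ) ^ m := congrArg Prod.fst hk'
  have e3 : z.1 ^ l = (1 : Multiplicative ℤ) ^ m := congrArg Prod.fst hl'
  have e4 : z.2 ^ l = Multiplicative.ofAdd (1 : ℤ) ^ m := congrArg Prod.snd hl'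
  have f1 : k * (z.1).toAdd = m := by
    have := congrArg Multiplicative.toAdd e1
    simpa [smul_eq_mul] using this
  have f3 : l * (z.1).toAdd = 0 := by
    have := congrArg Multiplicative.toAdd e3
    simpa [smul_eq_mul] using this
  have f4 : l * (z.2).toAdd = m := by
    have := congrArg Multiplicative.toAdd e4
    simpa [smul_eq_mul] using this
  have hmZ : (m : ℤ) ≠ 0 := Int.natCast_ne_zero.mpr hmne
  rcases mul_eq_zero.mp f3 with h0 | h0
  · rw [h0, zero_mul] at f4; exact hmZ f4.symm
  · rw [h0, mul_zero] at f1; exact hmZ f1.symm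

lemma range_zz {Γ : Type*} [Group Γ] (f : Multiplicative ℤ × Multiplicative ℤ →* Γ)
    (hf : Function.Injective f) :
    Infinite ↥f.range ∧ (∀ a b : ↥f.range, a * b = b * a) ∧
      ¬ ∃ C : Subgroup ↥f.range, IsCyclic ↥C ∧ C.FiniteIndex := by
  refine ⟨?_, ?_, ?_⟩
  · exact Infinite.of_injective (fun x => (⟨f x, ⟨x, rfl⟩⟩ : ↥f.range))
      (fun a b hab => hf (by simpa [Subtype.ext_iff] using hab))
  · intro a b
    obtain ⟨x, hx⟩ := a.2
    obtain ⟨y, hy⟩ := b.2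
    apply Subtype.ext
    show (a : Γ) * b = (b : Γ) * a
    rw [← hx, ← hy, ← map_mul, ← map_mul, mul_comm x y]
  · rintro ⟨C, hC, hCfi⟩
    set e := MonoidHom.ofInjective hf with he
    set C' := Subgroup.comap (e : Multiplicative ℤ × Multiplicative ℤ →* ↥f.range) C with hC'
    have hmapeq : Subgroup.map (e : Multiplicative ℤ × Multiplicative ℤ →* ↥f.range) C' = C :=
      Subgroup.map_comap_eq_self_of_surjective e.surjective C
    have ec : ↥C' ≃* ↥C := (e.subgroupMap C').trans (MulEquiv.subgroupCongr hmapeq)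
    have hC'c : IsCyclic ↥C' := isCyclic_of_surjective ec.symm ec.symm.surjective
    have hC'fi : C'.FiniteIndex :=
      ⟨by have h2 := Subgroup.index_comap_of_surjective C
            (f := (e : Multiplicative ℤ × Multiplicative ℤ →* ↥f.range)) e.surjective
          rw [hC', h2]
          exact hCfi.index_ne_zero⟩
    exact zz_not_cyclic_finiteIndex ⟨C', hC'c, hC'fi⟩

open Polynomial in
lemma trans_pows (p : ℕ) [Fact p.Prime] {K : Type*} [Field K]
    [Algebra (ZMod p) K] (t : K)
    (ht : ¬ IsAlgebraic (ZMod p) t)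
    (a b a' b' : ℕ) (h : t ^ a * (1 + t) ^ b = t ^ a' * (1 + t) ^ b') :
    a = a' ∧ b = b' := by
  have hinj : Function.Injective (aeval t : (ZMod p)[X] →ₐ[ZMod p] K) :=
    transcendental_iff_injective.mp ht
  have key : (X ^ a * (1 + X) ^ b : (ZMod p)[X]) = X ^ a' * (1 + X) ^ b' := by
    apply hinj
    simp only [map_mul, map_pow, map_add, map_one, aeval_X]
    exact h
  have h1X : (1 + X : (ZMod p)[X]) = X - C (-1) := by
    rw [map_neg, map_one, sub_neg_eq_add, add_comm]
  have h1Xne : (1 + X : (ZMod p)[X]) ≠ 0 := by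
    rw [h1X]
    exact X_sub_C_ne_zero _
  have hne : ∀ a b : ℕ, (X ^ a * (1 + X) ^ b : (ZMod p)[X]) ≠ 0 :=
    fun a b => mul_ne_zero (pow_ne_zero _ X_ne_zero) (pow_ne_zero _ h1Xne)
  have e0 : ∀ a b : ℕ, rootMultiplicity 0 (X ^ a * (1 + X) ^ b : (ZMod p)[X]) = a := by
    intro a b
    rw [rootMultiplicity_mul (hne a b)]
    have r1 : rootMultiplicity (0 : ZMod p) (X ^ a) = a := by
      simpa using rootMultiplicity_X_sub_C_pow (0 : ZMod p) a
    have r2 : rootMultiplicity (0 : ZMod p) ((1 + X) ^ b) = 0 :=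
      rootMultiplicity_eq_zero (by simp [IsRoot])
    rw [r1, r2, add_zero]
  have em1 : ∀ a b : ℕ, rootMultiplicity (-1) (X ^ a * (1 + X) ^ b : (ZMod p)[X]) = b := by
    intro a b
    rw [rootMultiplicity_mul (hne a b)]
    have r1 : rootMultiplicity (-1 : ZMod p) (X ^ a) = 0 :=
      rootMultiplicity_eq_zero (by simp [IsRoot])
    have r2 : rootMultiplicity (-1 : ZMod p) ((1 + X) ^ b) = b := by
      rw [h1X]
      exact rootMultiplicity_X_sub_C_pow _ _
    rw [r1, r2, zero_add]
  constructor
  · have := congrArg (rootMultiplicity (0 : ZMod p)) key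
    rwa [e0, e0] at this
  · have := congrArg (rootMultiplicity (-1 : ZMod p)) key
    rwa [em1, em1] at this

lemma pow_int_eq {K : Type*} [Field K] (t : K) (ht0 : t ≠ 0) (ht1 : 1 + t ≠ 0)
    (hwild : ∀ a b a' b' : ℕ, t ^ a * (1 + t) ^ b = t ^ a' * (1 + t) ^ b' → a = a' ∧ b = b')
    (c d : ℤ) (h : t ^ c * (1 + t) ^ d = 1) : c = 0 ∧ d = 0 := by
  have hc : c = (c.toNat : ℤ) - ((-c).toNat : ℤ) := by omega
  have hd : d = (d.toNat : ℤ) - ((-d).toNat : ℤ) := by omega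
  rw [hc, hd, zpow_sub₀ ht0, zpow_sub₀ ht1, zpow_natCast, zpow_natCast, zpow_natCast,
    zpow_natCast, div_mul_div_comm, div_eq_one_iff_eq
      (mul_ne_zero (pow_ne_zero _ ht0) (pow_ne_zero _ ht1))] at h
  obtain ⟨h1, h2⟩ := hwild _ _ _ _ h
  omega

lemma psi_exists {K : Type*} [Field K] (t : K) (ht0 : t ≠ 0) (ht1 : 1 + t ≠ 0)
    (hpows : ∀ c d : ℤ, t ^ c * (1 + t) ^ d = 1 → c = 0 ∧ d = 0) :
    ∃ ψ : Multiplicative ℤ × Multiplicative ℤ →* Kˣ, Function.Injective ψ := by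
  set tu : Kˣ := Units.mk0 t ht0 with htu
  set su : Kˣ := Units.mk0 (1 + t) ht1 with hsu
  refine ⟨{ toFun := fun x => tu ^ (x.1.toAdd) * su ^ (x.2.toAdd),
            map_one' := by simp
            map_mul' := by
              intro x y
              simp only [Prod.fst_mul, Prod.snd_mul, toAdd_mul, zpow_add]
              rw [mul_mul_mul_comm] }, ?_⟩
  rw [injective_iff_map_eq_one]
  intro x hx
  have hx' : t ^ (x.1.toAdd) * (1 + t) ^ (x.2.toAdd) = 1 := by
    have := congrArg (Units.val) hx
    simpa [htu, hsu] using this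
  obtain ⟨h1, h2⟩ := hpows _ _ hx'
  have e1 : x.1 = 1 := by
    apply Multiplicative.toAdd.injective
    rw [h1, toAdd_one]
  have e2 : x.2 = 1 := by
    apply Multiplicative.toAdd.injective
    rw [h2, toAdd_one]
  exact Prod.ext e1 e2

section aux
variable {K : Type*} [Field K] {G : Type*} [Group G]

lemma augK_single (a : G) (b : K) : augK K G (MonoidAlgebra.single a b) = b := by
  simp [augK, MonoidAlgebra.lift_single]

lemma mem_V1_iff (u : (MonoidAlgebra K G)ˣ) :
    u ∈ V1 K G ↔ augK K G (u : MonoidAlgebra K G) = 1 := by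
  rw [V1, MonoidHom.mem_ker, Units.ext_iff]
  simp

open Polynomial in
lemma casep_main (p : ℕ) [Fact p.Prime] [CharP K p] [Infinite K]
    (h : G) (hne : h ≠ 1) (hp1 : h ^ p = 1) :
    ∃ H : Subgroup ↥(V1 K G), Infinite ↥H ∧ (∀ a b : ↥H, a * b = b * a) ∧
      ∀ a : ↥H, a ^ p = 1 := by
  classical
  haveI : CharP (MonoidAlgebra K G) p := charP_of_injective_algebraMap' K p
  have hp0 : p ≠ 0 := (Fact.out : p.Prime).ne_zero
  set x : MonoidAlgebra K G := MonoidAlgebra.of K G h - 1 with hxdef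
  have hxp : x ^ p = 0 := by
    rw [hxdef, sub_pow_char_of_commute _ (Commute.one_right _), one_pow, ← map_pow, hp1,
      map_one, sub_self]
  have hxne : x ≠ 0 := by
    intro hx
    have : (MonoidAlgebra.of K G h : MonoidAlgebra K G) = 1 := by
      rwa [hxdef, sub_eq_zero] at hx
    apply hne
    have := congrArg (fun z : MonoidAlgebra K G => z.coeff h) this
    simp only [MonoidAlgebra.of_apply, MonoidAlgebra.one_def, MonoidAlgebra.coeff_single] at this
    rw [Finsupp.single_apply, Finsupp.single_apply] at this
    by_contra hne'
    rw [if_pos rfl, if_neg (fun e : (1:G) = h => hne' e.symm)] at this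
    exact one_ne_zero this
  have haugx : augK K G x = 0 := by
    rw [hxdef, map_sub, map_one]
    have : (MonoidAlgebra.of K G h : MonoidAlgebra K G) = MonoidAlgebra.single h 1 := rfl
    rw [this, augK_single, sub_self]
  -- key facts about `aeval x q` for `eval 0 q = 1`
  have hnil : ∀ q : Polynomial K, eval 0 q = 0 → (aeval x q) ^ p = 0 := by
    intro q hq
    obtain ⟨q0, hq0⟩ : X ∣ q := by
      rw [X_dvd_iff, coeff_zero_eq_eval_zero]; exact hq
    rw [← map_pow, hq0, mul_pow, map_mul, map_pow, aeval_X, hxp, zero_mul]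
  have hunit : ∀ q : Polynomial K, eval 0 q = 1 → IsUnit (aeval x q) := by
    intro q hq
    have h1 : aeval x q = 1 + aeval x (q - 1) := by rw [map_sub, map_one]; abel
    rw [h1]
    exact IsNilpotent.isUnit_one_add ⟨p, hnil _ (by simp [hq])⟩
  have haug : ∀ q : Polynomial K, augK K G (aeval x q) = eval 0 q := by
    intro q
    rw [← Polynomial.aeval_algHom_apply, haugx, ← Polynomial.coe_aeval_eq_eval]
  -- the subgroup carrier
  set S : Set ↥(V1 K G) := {u | ∃ q : Polynomial K, eval 0 q = 1 ∧
      ((u : (MonoidAlgebra K G)ˣ) : MonoidAlgebra K G) = aeval x q} with hSdef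
  have hmulS : ∀ a b : ↥(V1 K G), a ∈ S → b ∈ S → a * b ∈ S := by
    rintro a b ⟨qa, ha1, ha2⟩ ⟨qb, hb1, hb2⟩
    refine ⟨qa * qb, by simp [ha1, hb1], ?_⟩
    have hab : ((((a*b : ↥(V1 K G)) : (MonoidAlgebra K G)ˣ)) : MonoidAlgebra K G)
        = (((a : (MonoidAlgebra K G)ˣ)) : MonoidAlgebra K G)
          * ((b : (MonoidAlgebra K G)ˣ) : MonoidAlgebra K G) := rfl
    rw [hab, ha2, hb2, ← map_mul]
  have hval_eq : ∀ (a : ↥(V1 K G)) (q : Polynomial K),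
      ((a : (MonoidAlgebra K G)ˣ) : MonoidAlgebra K G) = aeval x q →
      (1 : MonoidAlgebra K G) - aeval x (1 - q) = aeval x q := by
    intro a q ha
    rw [map_sub, map_one]; abel
  have hinvS : ∀ a : ↥(V1 K G), a ∈ S → a⁻¹ ∈ S := by
    rintro a ⟨q, hq1, hq2⟩
    set z : MonoidAlgebra K G := aeval x (1 - q) with hzdef
    have hzp : z ^ p = 0 := hnil _ (by simp [hq1])
    set W : Polynomial K := ∑ i ∈ Finset.range p, (1 - q) ^ i with hWdef
    have hW0 : eval 0 W = 1 := by
      rw [hWdef, eval_finset_sum]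
      simp only [eval_pow, eval_sub, eval_one, hq1, sub_self]
      rw [zero_geom_sum, if_neg hp0]
    have hwval : aeval x W = ∑ i ∈ Finset.range p, z ^ i := by
      rw [hWdef, map_sum]
      simp [hzdef]
    have hmulw : ((a : (MonoidAlgebra K G)ˣ) : MonoidAlgebra K G) * aeval x W = 1 := by
      have h1z : ((a : (MonoidAlgebra K G)ˣ) : MonoidAlgebra K G) = 1 - z := by
        rw [hq2, ← hval_eq a q hq2]
      rw [h1z, hwval]
      have hcz : Commute z (∑ i ∈ Finset.range p, z ^ i) :=
        Commute.sum_right _ _ _ (fun i _ => (Commute.refl z).pow_right i)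
      have h2 : (1 - z) * ∑ i ∈ Finset.range p, z ^ i
          = -((∑ i ∈ Finset.range p, z ^ i) * (z - 1)) := by
        rw [sub_mul, one_mul, mul_sub, mul_one, neg_sub, hcz.eq]
      rw [h2, geom_sum_mul, hzp]
      norm_num
    refine ⟨W, hW0, ?_⟩
    show (((a : (MonoidAlgebra K G)ˣ)⁻¹ : (MonoidAlgebra K G)ˣ) : MonoidAlgebra K G) = _
    exact Units.inv_eq_of_mul_eq_one_right hmulw
  set H : Subgroup ↥(V1 K G) :=
    { carrier := S
      one_mem' := ⟨1, by simp, by simp⟩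
      mul_mem' := fun {a} {b} ha hb => hmulS a b ha hb
      inv_mem' := fun {a} ha => hinvS a ha } with hHdef
  refine ⟨H, ?_, ?_, ?_⟩
  · -- infinite
    have hmk : ∀ α : K, ∃ u : ↥H,
        ((((u : ↥(V1 K G)) : (MonoidAlgebra K G)ˣ)) : MonoidAlgebra K G) = 1 + α • x := by
      intro α
      have hq0 : eval 0 (1 + C α * X) = 1 := by simp
      have hu := hunit _ hq0
      have humem : hu.unit ∈ V1 K G := by
        rw [mem_V1_iff, IsUnit.unit_spec, haug, hq0]
      have hSmem : (⟨hu.unit, humem⟩ : ↥(V1 K G)) ∈ S := ⟨_, hq0, hu.unit_spec⟩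
      refine ⟨⟨⟨hu.unit, humem⟩, hSmem⟩, ?_⟩
      show (hu.unit : MonoidAlgebra K G) = _
      rw [hu.unit_spec, map_add, map_one, map_mul, aeval_X, aeval_C, Algebra.smul_def]
    choose ι hι using hmk
    have hinj : Function.Injective ι := by
      intro α β hab
      have := congrArg (fun u : ↥H =>
        ((((u : ↥(V1 K G)) : (MonoidAlgebra K G)ˣ)) : MonoidAlgebra K G)) hab
      simp only [hι] at this
      have h2 : (α - β) • x = 0 := by
        rw [sub_smul, sub_eq_zero]
        exact add_left_cancel this
      rcases smul_eq_zero.mp h2 with h3 | h3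
      · exact sub_eq_zero.mp h3
      · exact absurd h3 hxne
    exact Infinite.of_injective ι hinj
  · -- commutative
    intro a b
    obtain ⟨qa, _, ha2⟩ := a.2
    obtain ⟨qb, _, hb2⟩ := b.2
    refine Subtype.ext (Subtype.ext (Units.ext ?_))
    have e1 : ((((a * b : ↥H) : ↥(V1 K G)) : (MonoidAlgebra K G)ˣ) : MonoidAlgebra K G)
        = ((((a : ↥H) : ↥(V1 K G)) : (MonoidAlgebra K G)ˣ) : MonoidAlgebra K G)
        * ((((b : ↥H) : ↥(V1 K G)) : (MonoidAlgebra K G)ˣ) : MonoidAlgebra K G) := rfl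
    have e2 : ((((b * a : ↥H) : ↥(V1 K G)) : (MonoidAlgebra K G)ˣ) : MonoidAlgebra K G)
        = ((((b : ↥H) : ↥(V1 K G)) : (MonoidAlgebra K G)ˣ) : MonoidAlgebra K G)
        * ((((a : ↥H) : ↥(V1 K G)) : (MonoidAlgebra K G)ˣ) : MonoidAlgebra K G) := rfl
    show ((((a * b : ↥H) : ↥(V1 K G)) : (MonoidAlgebra K G)ˣ) : MonoidAlgebra K G)
        = ((((b * a : ↥H) : ↥(V1 K G)) : (MonoidAlgebra K G)ˣ) : MonoidAlgebra K G)
    rw [e1, e2, ha2, hb2, ← map_mul, ← map_mul, mul_comm qa qb]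
  · -- exponent p
    intro a
    obtain ⟨q, hq1, hq2⟩ := a.2
    refine Subtype.ext (Subtype.ext (Units.ext ?_))
    have e1 : ((((a ^ p : ↥H) : ↥(V1 K G)) : (MonoidAlgebra K G)ˣ) : MonoidAlgebra K G)
        = ((((a : ↥H) : ↥(V1 K G)) : (MonoidAlgebra K G)ˣ) : MonoidAlgebra K G) ^ p := rfl
    show ((((a ^ p : ↥H) : ↥(V1 K G)) : (MonoidAlgebra K G)ˣ) : MonoidAlgebra K G) = 1
    rw [e1, hq2]
    have hsplit : aeval x q = 1 + aeval x (q - 1) := by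
      rw [map_sub, map_one]; abel
    rw [hsplit, add_pow_char_of_commute _ (Commute.one_left _), one_pow,
      hnil _ (by simp [hq1]), add_zero]

open MonoidAlgebra in
lemma coprime_case (p : ℕ) [Fact p.Prime] [CharP K p]
    (g : G) (hg : g ≠ 1) (hfin : IsOfFinOrder g) (hpn : ¬ p ∣ orderOf g) :
    ∃ φ : Kˣ →* ↥(V1 K G), Function.Injective φ := by
  classical
  set n := orderOf g with hn
  have hnpos : 0 < n := hfin.orderOf_pos
  have hnK : (n : K) ≠ 0 := fun h0 => hpn ((CharP.cast_eq_zero_iff K p n).mp h0)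
  set Hg := Subgroup.zpowers g with hHg
  haveI hfinHg : Finite ↥Hg := (finite_zpowers.mpr hfin).to_subtype
  haveI := Fintype.ofFinite ↥Hg
  have hcard : Fintype.card ↥Hg = n := by
    rw [← Nat.card_eq_fintype_card]; exact Nat.card_zpowers g
  set σ : MonoidAlgebra K G := ∑ x : ↥Hg, single (x : G) (1 : K) with hσ
  have hmulσ : ∀ h : ↥Hg, single (h : G) (1 : K) * σ = σ := by
    intro h
    rw [hσ, Finset.mul_sum]
    calc ∑ x : ↥Hg, single (h : G) (1:K) * single (x : G) (1:K)
        = ∑ x : ↥Hg, single ((h * x : ↥Hg) : G) (1 : K) := by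
          refine Finset.sum_congr rfl fun x _ => ?_
          rw [MonoidAlgebra.single_mul_single, one_mul]
          rfl
      _ = ∑ x : ↥Hg, single ((x : ↥Hg) : G) (1 : K) :=
          Fintype.sum_equiv (Equiv.mulLeft h) _ _ (fun x => rfl)
  have hσσ : σ * σ = (n : K) • σ := by
    nth_rewrite 1 [hσ]
    rw [Finset.sum_mul]
    have : ∀ x : ↥Hg, single (x : G) (1:K) * σ = σ := hmulσ
    rw [Finset.sum_congr rfl fun x _ => this x, Finset.sum_const, Finset.card_univ, hcard]
    rw [Nat.cast_smul_eq_nsmul (R := K)]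
  set e : MonoidAlgebra K G := (n : K)⁻¹ • σ with he
  have hee : e * e = e := by
    rw [he, smul_mul_assoc, mul_smul_comm, hσσ, smul_smul, smul_smul]
    congr 1
    field_simp
  set f : MonoidAlgebra K G := 1 - e with hf
  have hef : e * f = 0 := by rw [hf, mul_sub, mul_one, hee, sub_self]
  have hfe : f * e = 0 := by rw [hf, sub_mul, one_mul, hee, sub_self]
  have hff : f * f = f := by rw [hf, sub_mul, one_mul, ← hf, hef, sub_zero]
  set ufun : K → MonoidAlgebra K G := fun c => e + c • f with hufun
  have humul : ∀ c d : K, ufun c * ufun d = ufun (c * d) := by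
    intro c d
    simp only [hufun]
    rw [add_mul, mul_add, mul_add, hee, mul_smul_comm, hef, smul_zero, add_zero,
      smul_mul_assoc, hfe, smul_zero, zero_add, smul_mul_assoc, mul_smul_comm, hff,
      smul_smul]
  have hu1 : ufun 1 = 1 := by
    simp only [hufun, one_smul, hf]
    abel
  -- augmentation
  have haugσ : augK K G σ = (n : K) := by
    rw [hσ, map_sum]
    have : ∀ x : ↥Hg, augK K G (single (x : G) (1:K)) = 1 := fun x => augK_single _ _
    rw [Finset.sum_congr rfl fun x _ => this x, Finset.sum_const, Finset.card_univ, hcard]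
    simp
  have hauge : augK K G e = 1 := by
    rw [he, map_smul, haugσ, smul_eq_mul, inv_mul_cancel₀ hnK]
  have haugu : ∀ c : K, augK K G (ufun c) = 1 := by
    intro c
    rw [hufun]
    simp only [map_add, map_smul, hf, map_sub, map_one, hauge, sub_self, smul_zero, add_zero]
  -- f ≠ 0
  have hσg : σ.coeff g = 1 := by
    rw [hσ]
    rw [MonoidAlgebra.coeff_sum, Finsupp.finset_sum_apply]
    have hmem : g ∈ Hg := Subgroup.mem_zpowers g
    have : ∀ x : ↥Hg, (single (x : G) (1:K)).coeff g = if x = ⟨g, hmem⟩ then 1 else 0 := by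
      intro x
      rw [MonoidAlgebra.coeff_single, Finsupp.single_apply]
      congr 1
      simp [Subtype.ext_iff, eq_comm]
    rw [Finset.sum_congr rfl fun x _ => this x, Finset.sum_ite_eq' Finset.univ]
    simp
  have hfne : f ≠ 0 := by
    intro h0
    have : f.coeff g = 0 := by rw [h0]; rfl
    rw [hf, MonoidAlgebra.coeff_sub, Finsupp.sub_apply, MonoidAlgebra.one_def, MonoidAlgebra.coeff_single, Finsupp.single_apply,
      if_neg (fun h1 : (1:G) = g => hg h1.symm)] at this
    rw [he, MonoidAlgebra.coeff_smul, Finsupp.smul_apply, hσg, smul_eq_mul, mul_one] at this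
    rw [zero_sub, neg_eq_zero] at this
    exact hnK (inv_eq_zero.mp this)
  -- units
  have hval : ∀ lam : Kˣ, ufun (lam : K) * ufun ((lam⁻¹ : Kˣ) : K) = 1 := by
    intro lam
    rw [humul]
    norm_num
    exact hu1
  set uu : Kˣ → (MonoidAlgebra K G)ˣ := fun lam =>
    ⟨ufun (lam : K), ufun ((lam⁻¹ : Kˣ) : K), hval lam, by
      have := hval lam⁻¹
      simpa using this⟩ with huu
  have huumem : ∀ lam : Kˣ, uu lam ∈ V1 K G := by
    intro lam
    rw [mem_V1_iff]
    exact haugu _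
  set φ0 : Kˣ →* (MonoidAlgebra K G)ˣ :=
    { toFun := uu
      map_one' := Units.ext (by simp only [huu, Units.val_one, Units.val_mk]; exact hu1)
      map_mul' := fun a b => Units.ext (by
        simp only [huu, Units.val_mk, Units.val_mul]
        rw [humul]) } with hφ0
  refine ⟨φ0.codRestrict (V1 K G) huumem, ?_⟩
  intro a b hab
  have h1 : ufun (a : K) = ufun (b : K) := by
    have := congrArg (fun u : ↥(V1 K G) => ((u : (MonoidAlgebra K G)ˣ) : MonoidAlgebra K G)) hab
    exact this
  have h2 : ((a : K) - (b : K)) • f = 0 := by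
    simp only [hufun] at h1
    rw [sub_smul, sub_eq_zero]
    exact add_left_cancel h1
  rcases smul_eq_zero.mp h2 with h3 | h3
  · exact Units.ext (sub_eq_zero.mp h3)
  · exact absurd h3 hfne

end aux

/-- If `G` contains a nontrivial torsion element and `K` has characteristic
`p > 0` and is not algebraic over `GF(p)`, then `V(KG)` contains a subgroup
isomorphic to `ℤ × ℤ` or an infinite abelian subgroup of exponent `p`; in
particular, `V(KG)` contains an infinite abelian subgroup that is not
virtually cyclic. -/
theorem stmt18 (K : Type*) [Field K] (p : ℕ) [Fact p.Prime] [CharP K p]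
    (htr : ¬ @Algebra.IsAlgebraic (ZMod p) K _ _ (ZMod.algebra K p))
    (G : Type*) [Group G]
    (g : G) (hg : g ≠ 1) (hgfin : IsOfFinOrder g) :
    ((∃ f : Multiplicative ℤ × Multiplicative ℤ →* ↥(V1 K G),
        Function.Injective f) ∨
      (∃ H : Subgroup ↥(V1 K G), Infinite ↥H ∧ (∀ a b : ↥H, a * b = b * a) ∧
        ∀ a : ↥H, a ^ p = 1)) ∧
      ∃ H : Subgroup ↥(V1 K G), Infinite ↥H ∧ (∀ a b : ↥H, a * b = b * a) ∧
        ¬ ∃ C : Subgroup ↥H, IsCyclic ↥C ∧ C.FiniteIndex := by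
  classical
  letI := ZMod.algebra K p
  have hp0 : p ≠ 0 := (Fact.out : p.Prime).ne_zero
  haveI : Infinite K := by
    by_contra hI
    rw [not_infinite_iff_finite] at hI
    haveI : Module.Finite (ZMod p) K := Module.finite_iff_finite.mpr hI
    exact htr (Algebra.IsAlgebraic.of_finite (ZMod p) K)
  by_cases hdvd : p ∣ orderOf g
  · -- the case `p ∣ orderOf g`
    have hordpos : 0 < orderOf g := hgfin.orderOf_pos
    set h := g ^ (orderOf g / p) with hh
    have hhp : h ^ p = 1 := by
      rw [hh, ← pow_mul, Nat.div_mul_cancel hdvd, pow_orderOf_eq_one]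
    have hne : h ≠ 1 := by
      intro h1
      have hdvd2 : orderOf g ∣ orderOf g / p := orderOf_dvd_of_pow_eq_one (hh ▸ h1)
      have hlt : orderOf g / p < orderOf g :=
        Nat.div_lt_self hordpos (Fact.out : p.Prime).one_lt
      have hpos : 0 < orderOf g / p :=
        Nat.div_pos (Nat.le_of_dvd hordpos hdvd) (Fact.out : p.Prime).pos
      exact absurd (Nat.le_of_dvd hpos hdvd2) (by omega)
    obtain ⟨H, h1, h2, h3⟩ := casep_main (K := K) p h hne hhp
    haveI := h1
    exact ⟨Or.inr ⟨H, h1, h2, h3⟩, H, h1, h2, not_vc_of_exponent hp0 h3⟩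
  · -- the case `p ∤ orderOf g`
    obtain ⟨t, ht⟩ : ∃ x : K, ¬ IsAlgebraic (ZMod p) x := by
      by_contra hcon
      push_neg at hcon
      exact htr ⟨hcon⟩
    have ht0 : t ≠ 0 := by
      rintro rfl
      exact ht isAlgebraic_zero
    have ht1 : (1 : K) + t ≠ 0 := by
      intro h0
      apply ht
      refine ⟨Polynomial.X + 1, ?_, ?_⟩
      · intro hXone
        have := congrArg (Polynomial.eval (0 : ZMod p)) hXone
        simpa using this
      · simp only [map_add, Polynomial.aeval_X, map_one]
        rw [add_comm] at h0
        exact h0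
    have hwild := fun a b a' b' => trans_pows p t ht a b a' b'
    have hpows := fun c d => pow_int_eq t ht0 ht1 hwild c d
    obtain ⟨ψ, hψ⟩ := psi_exists t ht0 ht1 hpows
    obtain ⟨φ, hφ⟩ := coprime_case (K := K) p g hg hgfin hdvd
    have hF : Function.Injective (φ.comp ψ) := hφ.comp hψ
    obtain ⟨hi, hc, hnv⟩ := range_zz (φ.comp ψ) hF
    exact ⟨Or.inl ⟨φ.comp ψ, hF⟩, (φ.comp ψ).range, hi, hc, hnv⟩
end
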